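/- For any nonempty word η = x_{i1} ⋯ x_{il} ∈ X*, the antipode S of the output feedback Hopf algebra satisfies S a_η = (−1)^{|η|−1} Θ̃′_η (a_∅), where |η| = l, Θ̃′_η := θ̃′_{il} ∘ ⋯ ∘ θ̃′_{i1}, θ̃′_1 := −θ̃_1 (so θ̃′_1(a_ν) = −a_{ν x1}), and θ̃′_0 := −θ̃_0 + κ_∅ ∘ θ̃_1 (so θ̃′_0(a_ν) = −a_{ν x0} + a_{ν x1} a_∅). -/

import Mathlib

open scoped TensorProduct

noncomputable section

namespace Paper

/-- Words over the alphabet `X = {x0, x1}`, encoded as lists over `Fin 2`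
(`0` stands for the letter `x0` and `1` for the letter `x1`). -/
abbrev Word : Type := List (Fin 2)

/-- Formal power series `ℝ⟨⟨X⟩⟩`, given by their coefficient functions `η ↦ ⟨c,η⟩`. -/
abbrev Series : Type := Word → ℝ

/-- The left shift `x_i⁻¹(c)`. -/
def lshift (i : Fin 2) (c : Series) : Series := fun w => c (i :: w)

/-- Left concatenation `x_i c` of the letter `x_i` onto every word of `c`. -/
def lconcat (i : Fin 2) (c : Series) : Series := fun w =>
  match w with
  | [] => 0
  | j :: v => if j = i then c v else 0

/-- Right concatenation `p x_i` of the letter `x_i` onto every word of `p`. -/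
def rconcat {R : Type*} [Zero R] (i : Fin 2) (p : Word → R) : Word → R := fun w =>
  if w.getLast? = some i then p w.dropLast else 0

/-- The series of a single word. -/
def ind (η : Word) : Series := fun w => if w = η then 1 else 0

/-- The empty word as a series, the unit `∅` (often written `1`). -/
def one : Series := ind []

/-- The shuffle product, defined coefficientwise by the recursion
`⟨c ⧢ d, ∅⟩ = ⟨c,∅⟩⟨d,∅⟩` and `⟨c ⧢ d, x_i w⟩ = ⟨x_i⁻¹(c) ⧢ d, w⟩ + ⟨c ⧢ x_i⁻¹(d), w⟩`,
which is the bilinear (and ultrametrically continuous) extension of the recursive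
shuffle product of words. -/
def shuffleFn : Series → Series → Word → ℝ
  | c, d, [] => c [] * d []
  | c, d, i :: w => shuffleFn (lshift i c) d w + shuffleFn c (lshift i d) w

/-- The shuffle product on `ℝ⟨⟨X⟩⟩`. -/
def sh (c d : Series) : Series := shuffleFn c d

/-- The map `φ_d(x_i)` for the modified composition product:
`φ_d(x0)(e) = x0 e` and `φ_d(x1)(e) = x1 e + x0 (d ⧢ e)`. -/
def phiLetter (d : Series) (i : Fin 2) (e : Series) : Series :=
  if i = 0 then lconcat 0 e else lconcat 1 e + lconcat 0 (sh d e)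

/-- `φ_d(η)`, the algebra-homomorphism extension determined by
`φ_d(x_i η) = φ_d(x_i) ∘ φ_d(η)` and `φ_d(∅) = id`. -/
def phi (d : Series) : Word → Series → Series
  | [], e => e
  | i :: η, e => phiLetter d i (phi d η e)

/-- The modified composition product `c ∘̃ d = Σ_η ⟨c,η⟩ φ_d(η)(1)`. -/
def mcomp (c d : Series) : Series := fun w => ∑' η : Word, c η * phi d η one w

/-- The map `ψ_d(x_i)` for the composition product:
`ψ_d(x0)(e) = x0 e` and `ψ_d(x1)(e) = x0 (d ⧢ e)`. -/
def psiLetter (d : Series) (i : Fin 2) (e : Series) : Series :=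
  if i = 0 then lconcat 0 e else lconcat 0 (sh d e)

/-- `ψ_d(η)`, determined by `ψ_d(x_i η) = ψ_d(x_i) ∘ ψ_d(η)` and `ψ_d(∅) = id`. -/
def psi (d : Series) : Word → Series → Series
  | [], e => e
  | i :: η, e => psiLetter d i (psi d η e)

/-- The composition product `c ∘ d = Σ_η ⟨c,η⟩ ψ_d(η)(1)`. -/
def comp (c d : Series) : Series := fun w => ∑' η : Word, c η * psi d η one w

/-- The group operation on `ℝ⟨⟨X_δ⟩⟩ = {δ + c}`, transported to the `c`-parts:
`c_δ ∘ d_δ = δ + (d + c ∘̃ d)`. -/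
def gop (c d : Series) : Series := d + mcomp c d

/-- The Ferfera series `c = Σ_{k ≥ 0} k! x1^k`. -/
def ferfera : Series := fun w =>
  if w = List.replicate w.length (1 : Fin 2) then (Nat.factorial w.length : ℝ) else 0

/-- The degree of a word, `deg(η) = 2|η|_{x0} + |η|_{x1} + 1`. -/
def degW (η : Word) : ℕ := 2 * η.count 0 + η.count 1 + 1

/-- The output feedback Hopf algebra `H`: the free unital commutative `ℝ`-algebra on the
coordinate functions `a_η`, realized as polynomials in commuting variables indexed by words. -/
abbrev H : Type := MvPolynomial Word ℝ

/-- The coordinate function `a_η`. -/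
def aw (η : Word) : H := MvPolynomial.X η

/-- Character (pointwise) evaluation of elements of `H` at a series `c`:
`(a_{η₁} ⋯ a_{η_l})(c) = ⟨c,η₁⟩ ⋯ ⟨c,η_l⟩`, extended as an algebra map. -/
def evalS (c : Series) : H →ₐ[ℝ] ℝ := MvPolynomial.aeval c

/-- Evaluation of `H ⊗ H` at a pair of series: `(p ⊗ q)(c,d) = p(c) q(d)`. -/
def evalPair (c d : Series) : H ⊗[ℝ] H →ₗ[ℝ] ℝ :=
  (LinearMap.mul' ℝ ℝ).comp (TensorProduct.map (evalS c).toLinearMap (evalS d).toLinearMap)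

/-- The counit `ε` of `H`: `ε(a_η) = 0`, `ε(1) = 1`. -/
def counit : H →ₐ[ℝ] ℝ := evalS 0

/-- The defining property of the full coproduct `Δ` of the output feedback Hopf algebra:
`Δ a_η = Δ̃ a_η + 1 ⊗ a_η` where `Δ̃ a_η (c,d) = ⟨c ∘̃ d, η⟩`, i.e.
`(Δ a_η)(c,d) = ⟨c ∘̃ d, η⟩ + ⟨d, η⟩` for all series `c, d`; `Δ` is an algebra morphism. -/
def IsFBCoproduct (Δ : H →ₐ[ℝ] (H ⊗[ℝ] H)) : Prop :=
  ∀ (η : Word) (c d : Series), evalPair c d (Δ (aw η)) = mcomp c d η + d η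

/-- `S` is an antipode for the coproduct `Δ` (with counit `ε`):
`μ ∘ (S ⊗ id) ∘ Δ = 1·ε = μ ∘ (id ⊗ S) ∘ Δ`. -/
def IsAntipode (Δ : H →ₐ[ℝ] (H ⊗[ℝ] H)) (S : H →ₗ[ℝ] H) : Prop :=
  (∀ p : H, LinearMap.mul' ℝ H (TensorProduct.map S LinearMap.id (Δ p)) = counit p • 1) ∧
  (∀ p : H, LinearMap.mul' ℝ H (TensorProduct.map LinearMap.id S (Δ p)) = counit p • 1)

/-- The right-augmentation operator `θ̃_i`, the derivation on `H` with `θ̃_i(a_η) = a_{η x_i}`. -/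
def thetaR (i : Fin 2) : Derivation ℝ H H :=
  MvPolynomial.mkDerivation ℝ fun η => aw (η ++ [i])

/-- The left-augmentation operator `θ_i`, the derivation on `H` with `θ_i(a_η) = a_{x_i η}`. -/
def thetaL (i : Fin 2) : Derivation ℝ H H :=
  MvPolynomial.mkDerivation ℝ fun η => aw (i :: η)

/-- The multiplication operator `κ_∅(h) = h · a_∅`. -/
def kappaE : H →ₗ[ℝ] H := LinearMap.mulRight ℝ (aw [])

/-- The shuffle coefficient `⟨ξ ⧢ ν, η⟩`. -/
def shCoeff (ξ ν η : Word) : ℝ := sh (ind ξ) (ind ν) η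

/-- The finite set of words of length `n`. -/
def wordsLen (n : ℕ) : Finset Word :=
  (Finset.univ : Finset (Fin n → Fin 2)).image List.ofFn

/-- The deshuffle coproduct `Δ_⧢ a_η = Σ_{ξ,ν} ⟨ξ ⧢ ν, η⟩ a_ξ ⊗ a_ν`
(the unique coproduct satisfying `Δ_⧢ a_∅ = a_∅ ⊗ a_∅` and the coderivation recursions
with respect to the augmentation operators). -/
def deshuffle (η : Word) : H ⊗[ℝ] H :=
  ∑ k ∈ Finset.range (η.length + 1), ∑ ξ ∈ wordsLen k, ∑ ν ∈ wordsLen (η.length - k),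
    shCoeff ξ ν η • (aw ξ ⊗ₜ[ℝ] aw ν)

/-- Iterated integrals: `E_∅[u](t) = 1`, `E_{x_i η}[u](t) = ∫₀ᵗ u_i(s) E_η[u](s) ds`. -/
def E (u : Fin 2 → ℝ → ℝ) : Word → ℝ → ℝ
  | [], _ => 1
  | i :: η, t => ∫ s in (0:ℝ)..t, u i s * E u η s

end Paper

namespace Paper

/-- The operator `θ̃′_i` on `H`: `θ̃′_1 := −θ̃_1` and `θ̃′_0 := −θ̃_0 + κ_∅ ∘ θ̃_1`. -/
def thetaP (i : Fin 2) : H →ₗ[ℝ] H :=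
  if i = 0 then -(thetaR 0).toLinearMap + kappaE ∘ₗ (thetaR 1).toLinearMap
  else -(thetaR 1).toLinearMap

/-- `Θ̃′_η := θ̃′_{i_l} ∘ ⋯ ∘ θ̃′_{i_1}` for `η = x_{i_1} ⋯ x_{i_l}`. -/
def thetaPWord : Word → (H →ₗ[ℝ] H)
  | [] => LinearMap.id
  | i :: η => thetaPWord η ∘ₗ thetaP i

end Paper

/-!
Let `a = Σ_η a_η η` be the generic series (`aw`) and `Q_{ξη} = ⟨φ_a(ξ)(1), η⟩ ∈ H`, so that
`Δ a_η = Σ_ξ a_ξ ⊗ Q_{ξη} + 1 ⊗ a_η`. The antipode equation becomes the linear system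
`Σ_ξ S(a_ξ) Q_{ξη} = -a_η`, which is unitriangular for the grading `deg` and so has at most
one solution.

With the derivations `δ_0 = θ̃_0 - a_∅ θ̃_1` and `δ_1 = θ̃_1` (so `θ̃′_i = -δ_i`), the map
`h ↦ Σ_ξ δ_ξ(h) φ_a(ξ)(1)` is an algebra morphism into the shuffle algebra of `H`-valued series,
because both sides transform in the same way under the left shifts `x_i⁻¹`. It sends `a_μ` to
`Σ_η a_{μη} η`; for `μ = ∅` this says that `-δ_η(a_∅) = (-1)^{|η|-1} Θ̃′_η(a_∅)` solves the system.
-/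

namespace Paper

theorem fin_two_eq_zero_or_eq_one (i : Fin 2) : i = 0 ∨ i = 1 := by omega

section Series

variable {R : Type*} [CommRing R]

/-- The recursion of `sh`, over any commutative ring: the coefficients `Q_{ξη}` live in `H`. -/
def shuffle : (Word → R) → (Word → R) → Word → R
  | c, d, [] => c [] * d []
  | c, d, i :: w => shuffle (fun v => c (i :: v)) d w + shuffle c (fun v => d (i :: v)) w

@[simp] theorem shuffle_nil (c d : Word → R) : shuffle c d [] = c [] * d [] := rfl

theorem shuffle_cons (c d : Word → R) (i : Fin 2) (w : Word) :
    shuffle c d (i :: w) = shuffle (fun v => c (i :: v)) d w + shuffle c (fun v => d (i :: v)) w :=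
  rfl

theorem sh_eq_shuffle : sh = shuffle := by
  funext c d w
  induction w generalizing c d with
  | nil => rfl
  | cons i w ih => exact congrArg₂ (· + ·) (ih _ _) (ih _ _)

theorem shuffle_comm (c d : Word → R) : shuffle c d = shuffle d c := by
  funext w
  induction w generalizing c d with
  | nil => exact mul_comm _ _
  | cons i w ih => rw [shuffle_cons, shuffle_cons, ih, ih (fun v => d (i :: v)), add_comm]

theorem shuffle_add_left (c c' d : Word → R) :
    shuffle (c + c') d = shuffle c d + shuffle c' d := by
  funext w
  induction w generalizing c c' d with
  | nil => exact add_mul _ _ _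
  | cons i w ih =>
    simp only [shuffle_cons, Pi.add_apply] at ih ⊢
    rw [show (fun v => c (i :: v) + c' (i :: v)) = (fun v => c (i :: v)) + fun v => c' (i :: v)
      from rfl, ih, ih]
    abel

theorem shuffle_smul_left (a : R) (c d : Word → R) : shuffle (a • c) d = a • shuffle c d := by
  funext w
  induction w generalizing c d with
  | nil => exact mul_assoc _ _ _
  | cons i w ih =>
    rw [shuffle_cons, show (fun v => (a • c) (i :: v)) = a • fun v => c (i :: v) from rfl, ih, ih]
    simp only [Pi.smul_apply, smul_eq_mul, shuffle_cons, mul_add]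

theorem shuffle_add_right (c d d' : Word → R) :
    shuffle c (d + d') = shuffle c d + shuffle c d' := by
  rw [shuffle_comm, shuffle_add_left, shuffle_comm d, shuffle_comm d']

theorem shuffle_smul_right (a : R) (c d : Word → R) : shuffle c (a • d) = a • shuffle c d := by
  rw [shuffle_comm, shuffle_smul_left, shuffle_comm]

def shuffleₗ : (Word → R) →ₗ[R] (Word → R) →ₗ[R] Word → R :=
  LinearMap.mk₂ R shuffle shuffle_add_left shuffle_smul_left shuffle_add_right shuffle_smul_right

theorem shuffleₗ_apply (c d : Word → R) : shuffleₗ c d = shuffle c d := rfl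

theorem shuffle_assoc (a b c : Word → R) : shuffle (shuffle a b) c = shuffle a (shuffle b c) := by
  funext w
  induction w generalizing a b c with
  | nil => exact mul_assoc _ _ _
  | cons i w ih =>
    have shift (c d : Word → R) : (fun v => shuffle c d (i :: v)) =
        shuffle (fun v => c (i :: v)) d + shuffle c fun v => d (i :: v) := rfl
    rw [shuffle_cons, shuffle_cons, shift, shift, shuffle_add_left, shuffle_add_right]
    simp only [Pi.add_apply, ih]
    abel

theorem shuffle_left_comm (a b c : Word → R) :
    shuffle a (shuffle b c) = shuffle b (shuffle a c) := by
  rw [← shuffle_assoc, shuffle_comm a, shuffle_assoc]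

theorem shuffle_congr {c c' d d' : Word → R} {w : Word}
    (hc : ∀ v : Word, v.length ≤ w.length → c v = c' v)
    (hd : ∀ v : Word, v.length ≤ w.length → d v = d' v) : shuffle c d w = shuffle c' d' w := by
  induction w generalizing c c' d d' with
  | nil => rw [shuffle_nil, shuffle_nil, hc [] le_rfl, hd [] le_rfl]
  | cons i w ih =>
    have hc' (v : Word) (hv : v.length ≤ w.length) : c v = c' v := hc v (by simp; omega)
    have hd' (v : Word) (hv : v.length ≤ w.length) : d v = d' v := hd v (by simp; omega)
    rw [shuffle_cons, shuffle_cons,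
      ih (fun v hv => hc (i :: v) (by simpa using hv)) hd',
      ih hc' fun v hv => hd (i :: v) (by simpa using hv)]

theorem exists_sublist_of_shuffle_ne_zero {c d : Word → R} {w : Word} (h : shuffle c d w ≠ 0) :
    ∃ v, v.Sublist w ∧ d v ≠ 0 := by
  induction w generalizing c d with
  | nil => exact ⟨[], List.Sublist.slnil, fun hd => h (by simp [hd])⟩
  | cons i w ih =>
    rw [shuffle_cons] at h
    by_cases h₁ : shuffle (fun v => c (i :: v)) d w = 0
    · obtain ⟨v, hv, hdv⟩ := ih (c := c) (d := fun v => d (i :: v)) (by rwa [h₁, zero_add] at h)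
      exact ⟨i :: v, hv.cons_cons i, hdv⟩
    · obtain ⟨v, hv, hdv⟩ := ih h₁
      exact ⟨v, hv.cons i, hdv⟩

theorem map_shuffle {S F : Type*} [CommRing S] [FunLike F R S] [RingHomClass F R S] (f : F)
    (c d : Word → R) (w : Word) : f (shuffle c d w) = shuffle (f ∘ c) (f ∘ d) w := by
  induction w generalizing c d with
  | nil => exact map_mul f _ _
  | cons i w ih => rw [shuffle_cons, shuffle_cons, map_add, ih, ih]; rfl

def prepend (i : Fin 2) (c : Word → R) : Word → R
  | [] => 0
  | j :: v => if j = i then c v else 0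

def unitSeries : Word → R := fun w => if w = [] then 1 else 0

def phiStep (d : Word → R) (i : Fin 2) (e : Word → R) : Word → R :=
  if i = 0 then prepend 0 e else prepend 1 e + prepend 0 (shuffle d e)

/-- `phiOne d ξ` is `φ_d(ξ)(1)`, with coefficients in any commutative ring. -/
def phiOne (d : Word → R) : Word → Word → R
  | [] => unitSeries
  | i :: ξ => phiStep d i (phiOne d ξ)

@[simp] theorem phiOne_nil_apply (d : Word → R) (w : Word) :
    phiOne d [] w = if w = [] then 1 else 0 := rfl

@[simp] theorem phiOne_zero_cons_apply (d : Word → R) (ξ : Word) (j : Fin 2) (w : Word) :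
    phiOne d (0 :: ξ) (j :: w) = if j = 0 then phiOne d ξ w else 0 := rfl

@[simp] theorem phiOne_one_cons_apply (d : Word → R) (ξ : Word) (j : Fin 2) (w : Word) :
    phiOne d (1 :: ξ) (j :: w) =
      (if j = 1 then phiOne d ξ w else 0) + if j = 0 then shuffle d (phiOne d ξ) w else 0 := rfl

@[simp] theorem phiOne_cons_nil (d : Word → R) (i : Fin 2) (ξ : Word) :
    phiOne d (i :: ξ) [] = 0 := by
  obtain rfl | rfl := fin_two_eq_zero_or_eq_one i <;> simp [phiOne, phiStep, prepend]

theorem phi_one_eq_phiOne (d : Series) (ξ : Word) : phi d ξ one = phiOne d ξ := by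
  induction ξ with
  | nil => rfl
  | cons i ξ ih =>
    simp only [phi, phiOne, phiLetter, phiStep, ih, sh_eq_shuffle]
    rfl

theorem degW_cons_zero (w : Word) : degW (0 :: w) = degW w + 2 := by
  simp [degW]; ring

theorem degW_cons_one (w : Word) : degW (1 :: w) = degW w + 1 := by
  simp [degW]; ring

theorem degW_le_of_sublist {v w : Word} (h : v.Sublist w) : degW v ≤ degW w := by
  unfold degW
  have := h.count_le 0
  have := h.count_le 1
  omega

theorem eq_or_lt_of_phiOne_ne_zero {d : Word → R} {ξ w : Word} (h : phiOne d ξ w ≠ 0) :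
    ξ = w ∨ ξ.length ≤ w.length ∧ degW ξ < degW w := by
  induction ξ generalizing w with
  | nil => simp_all
  | cons i ξ ih =>
    obtain _ | ⟨j, v⟩ := w
    · simp at h
    obtain rfl | rfl := fin_two_eq_zero_or_eq_one i <;>
      obtain rfl | rfl := fin_two_eq_zero_or_eq_one j <;> simp at h
    · rcases ih h with rfl | ⟨hl, hd⟩
      · simp
      · right; simp [degW_cons_zero]; omega
    · obtain ⟨u, hu, hξu⟩ := exists_sublist_of_shuffle_ne_zero h
      have : ξ.length ≤ u.length ∧ degW ξ ≤ degW u := by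
        rcases ih hξu with rfl | ⟨hl, hd⟩
        · exact ⟨le_rfl, le_rfl⟩
        · exact ⟨hl, hd.le⟩
      have := hu.length_le
      have := degW_le_of_sublist hu
      right; simp [degW_cons_zero, degW_cons_one]; omega
    · rcases ih h with rfl | ⟨hl, hd⟩
      · simp
      · right; simp [degW_cons_one]; omega

theorem phiOne_eq_zero_of_length_lt {d : Word → R} {ξ w : Word} (h : w.length < ξ.length) :
    phiOne d ξ w = 0 := by
  by_contra hne
  rcases eq_or_lt_of_phiOne_ne_zero hne with rfl | ⟨hl, -⟩ <;> omega

theorem phiOne_self (d : Word → R) (w : Word) : phiOne d w w = 1 := by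
  induction w with
  | nil => rfl
  | cons i w ih => obtain rfl | rfl := fin_two_eq_zero_or_eq_one i <;> simp [ih]

theorem map_phiOne {S F : Type*} [CommRing S] [FunLike F R S] [RingHomClass F R S] (f : F)
    (d : Word → R) (ξ w : Word) : f (phiOne d ξ w) = phiOne (f ∘ d) ξ w := by
  induction ξ generalizing w with
  | nil => simp only [phiOne_nil_apply]; split_ifs <;> simp
  | cons i ξ ih =>
    have hcomp : f ∘ phiOne d ξ = phiOne (f ∘ d) ξ := funext ih
    obtain _ | ⟨j, v⟩ := w
    · simp
    obtain rfl | rfl := fin_two_eq_zero_or_eq_one i <;>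
      simp only [phiOne_zero_cons_apply, phiOne_one_cons_apply] <;> split_ifs <;>
      simp [ih, map_shuffle, hcomp]

end Series

def wordsLe : ℕ → Finset Word
  | 0 => {[]}
  | n + 1 => insert [] ((wordsLe n).image (List.cons 0) ∪ (wordsLe n).image (List.cons 1))

@[simp] theorem mem_wordsLe {n : ℕ} {ξ : Word} : ξ ∈ wordsLe n ↔ ξ.length ≤ n := by
  induction n generalizing ξ with
  | zero => simp [wordsLe]
  | succ n ih =>
    obtain _ | ⟨i, ξ⟩ := ξ
    · simp [wordsLe]
    obtain rfl | rfl := fin_two_eq_zero_or_eq_one i <;> simp [wordsLe, ih]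

theorem wordsLe_mono {m n : ℕ} (h : m ≤ n) : wordsLe m ⊆ wordsLe n := fun ξ hξ => by
  simp only [mem_wordsLe] at hξ ⊢; omega

theorem sum_wordsLe_succ {M : Type*} [AddCommMonoid M] (n : ℕ) (f : Word → M) :
    ∑ ξ ∈ wordsLe (n + 1), f ξ =
      f [] + ∑ ξ ∈ wordsLe n, f (0 :: ξ) + ∑ ξ ∈ wordsLe n, f (1 :: ξ) := by
  rw [wordsLe, Finset.sum_insert (by simp), Finset.sum_union, Finset.sum_image, Finset.sum_image,
    add_assoc]
  · exact fun _ _ _ _ => List.tail_eq_of_cons_eq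
  · exact fun _ _ _ _ => List.tail_eq_of_cons_eq
  · simp [Finset.disjoint_left]

/-- `θ̃′_i = -δ_i`; the `δ_i` are derivations since `κ_∅ ∘ θ̃_1 = a_∅ • θ̃_1`. -/
def delta (i : Fin 2) : Derivation ℝ H H :=
  if i = 0 then thetaR 0 - aw [] • thetaR 1 else thetaR 1

def derivWord : Word → H →ₗ[ℝ] H
  | [] => LinearMap.id
  | i :: ξ => derivWord ξ ∘ₗ (delta i).toLinearMap

theorem thetaR_aw (i : Fin 2) (μ : Word) : thetaR i (aw μ) = aw (μ ++ [i]) :=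
  MvPolynomial.mkDerivation_X _ _ _

theorem delta_mul (i : Fin 2) (h k : H) : delta i (h * k) = h * delta i k + delta i h * k := by
  rw [Derivation.leibniz, smul_eq_mul, smul_eq_mul, mul_comm k]

theorem thetaP_eq_neg_delta (i : Fin 2) : thetaP i = -(delta i).toLinearMap := by
  refine LinearMap.ext fun h => ?_
  obtain rfl | rfl := fin_two_eq_zero_or_eq_one i
  · simp [thetaP, delta, kappaE, mul_comm]
    abel
  · simp [thetaP, delta]

theorem thetaPWord_eq_smul_derivWord (ξ : Word) :
    thetaPWord ξ = (-1 : ℝ) ^ ξ.length • derivWord ξ := by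
  induction ξ with
  | nil => simp [thetaPWord, derivWord]
  | cons i ξ ih =>
    rw [thetaPWord, derivWord, ih, thetaP_eq_neg_delta, List.length_cons, pow_succ]
    refine LinearMap.ext fun h => ?_
    simp

@[simp] theorem derivWord_cons_apply (i : Fin 2) (ξ : Word) (h : H) :
    derivWord (i :: ξ) h = derivWord ξ (delta i h) := rfl

/-- `h ↦ Σ_ξ δ_ξ(h) φ_a(ξ)(1)` for the generic series `a = aw`. -/
def expansion : H →ₗ[ℝ] Word → H :=
  LinearMap.pi fun η =>
    ∑ ξ ∈ wordsLe η.length, LinearMap.mulRight ℝ (phiOne aw ξ η) ∘ₗ derivWord ξ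

theorem expansion_apply (h : H) (η : Word) :
    expansion h η = ∑ ξ ∈ wordsLe η.length, derivWord ξ h * phiOne aw ξ η := by
  simp [expansion]

theorem expansion_apply_of_le {n : ℕ} {η : Word} (hn : η.length ≤ n) (h : H) :
    expansion h η = ∑ ξ ∈ wordsLe n, derivWord ξ h * phiOne aw ξ η := by
  rw [expansion_apply]
  refine Finset.sum_subset (wordsLe_mono hn) fun ξ _ hξ => ?_
  rw [phiOne_eq_zero_of_length_lt (by simpa using hξ), mul_zero]

@[simp] theorem expansion_nil (h : H) : expansion h [] = h := by
  simp [expansion_apply, wordsLe, derivWord]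

theorem expansion_cons_one (h : H) (η : Word) :
    expansion h (1 :: η) = expansion (delta 1 h) η := by
  rw [expansion_apply, List.length_cons, sum_wordsLe_succ, expansion_apply]
  simp

theorem expansion_cons_zero (h : H) (η : Word) :
    expansion h (0 :: η) = expansion (delta 0 h) η + shuffle aw (expansion (delta 1 h)) η := by
  have hshuffle : ∑ ξ ∈ wordsLe η.length, derivWord ξ (delta 1 h) * shuffle aw (phiOne aw ξ) η =
      shuffle aw (expansion (delta 1 h)) η := calc
    _ = shuffle aw (∑ ξ ∈ wordsLe η.length, derivWord ξ (delta 1 h) • phiOne aw ξ) η := by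
      simp [← shuffleₗ_apply, map_sum, Finset.sum_apply]
    _ = _ := shuffle_congr (fun _ _ => rfl) fun v hv => by
      simp [Finset.sum_apply, expansion_apply_of_le hv]
  rw [expansion_apply, List.length_cons, sum_wordsLe_succ, expansion_apply, ← hshuffle]
  simp

theorem expansion_mul (h k : H) : expansion (h * k) = shuffle (expansion h) (expansion k) := by
  suffices ∀ n, ∀ η : Word, η.length ≤ n → ∀ h k : H,
      expansion (h * k) η = shuffle (expansion h) (expansion k) η from
    funext fun η => this _ η le_rfl h k
  intro n
  induction n with
  | zero =>
    intro η hη h k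
    rw [List.length_eq_zero_iff.1 (Nat.le_zero.1 hη)]
    simp
  | succ n ih =>
    rintro (_ | ⟨i, η⟩) hη h k
    · simp
    replace hη : η.length ≤ n := by simpa using hη
    obtain rfl | rfl := fin_two_eq_zero_or_eq_one i
    · have hδ₁ : shuffle aw (expansion (delta 1 (h * k))) η =
          shuffle (expansion h) (shuffle aw (expansion (delta 1 k))) η +
            shuffle (shuffle aw (expansion (delta 1 h))) (expansion k) η := by
        -- the shuffle with `aw` only sees words no longer than `η`, where `ih` applies
        have hmul (v : Word) (hv : v.length ≤ η.length) : expansion (delta 1 (h * k)) v =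
            (shuffle (expansion h) (expansion (delta 1 k)) +
              shuffle (expansion (delta 1 h)) (expansion k)) v := by
          rw [delta_mul, map_add, Pi.add_apply, ih v (hv.trans hη), ih v (hv.trans hη)]
          rfl
        rw [shuffle_congr (fun _ _ => rfl) hmul, shuffle_add_right, Pi.add_apply,
          shuffle_left_comm aw (expansion h), ← shuffle_assoc aw]
      have shift (c : H) : (fun v => expansion c (0 :: v)) =
          expansion (delta 0 c) + shuffle aw (expansion (delta 1 c)) :=
        funext (expansion_cons_zero c)
      rw [expansion_cons_zero, hδ₁, delta_mul, map_add, Pi.add_apply, ih η hη, ih η hη,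
        shuffle_cons, shift, shift, shuffle_add_left, shuffle_add_right]
      simp only [Pi.add_apply]
      abel
    · have shift (c : H) : (fun v => expansion c (1 :: v)) = expansion (delta 1 c) :=
        funext (expansion_cons_one c)
      rw [expansion_cons_one, delta_mul, map_add, Pi.add_apply, ih η hη, ih η hη,
        shuffle_cons, shift, shift, add_comm]

theorem expansion_aw (μ η : Word) : expansion (aw μ) η = aw (μ ++ η) := by
  suffices ∀ n, ∀ η : Word, η.length ≤ n → ∀ μ, expansion (aw μ) η = aw (μ ++ η) from
    this _ η le_rfl μ
  intro n
  induction n with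
  | zero =>
    intro η hη μ
    rw [List.length_eq_zero_iff.1 (Nat.le_zero.1 hη)]
    simp
  | succ n ih =>
    rintro (_ | ⟨i, η⟩) hη μ
    · simp
    replace hη : η.length ≤ n := by simpa using hη
    obtain rfl | rfl := fin_two_eq_zero_or_eq_one i
    · have hgeneric : expansion (aw [] * aw (μ ++ [1])) η =
          shuffle aw (expansion (aw (μ ++ [1]))) η := by
        rw [expansion_mul]
        exact shuffle_congr (fun v hv => by rw [ih v (hv.trans hη)]; rfl) fun _ _ => rfl
      simp [expansion_cons_zero, delta, thetaR_aw, hgeneric, ih η hη]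
    · simp [expansion_cons_one, delta, thetaR_aw, ih η hη]

theorem evalS_aw (c : Series) (η : Word) : evalS c (aw η) = c η := by
  simp [evalS, aw]

theorem evalS_phiOne (c : Series) (ξ η : Word) : evalS c (phiOne aw ξ η) = phi c ξ one η := by
  rw [map_phiOne, phi_one_eq_phiOne, show evalS c ∘ aw = c from funext (evalS_aw c)]

theorem mcomp_eq_sum (c d : Series) (η : Word) :
    mcomp c d η = ∑ ξ ∈ wordsLe η.length, c ξ * phiOne d ξ η := by
  simp only [mcomp, phi_one_eq_phiOne]
  exact tsum_eq_sum fun ξ hξ => by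
    rw [phiOne_eq_zero_of_length_lt (by simpa using hξ), mul_zero]

theorem evalPair_eq_eval_tensorEquivSum (c d : Series) (x : H ⊗[ℝ] H) :
    evalPair c d x =
      MvPolynomial.eval (Sum.elim c d) (MvPolynomial.tensorEquivSum ℝ Word Word ℝ x) := by
  have hprod : Algebra.TensorProduct.productMap (evalS c) (evalS d) =
      (MvPolynomial.aeval (Sum.elim c d)).comp
        (MvPolynomial.tensorEquivSum ℝ Word Word ℝ).toAlgHom := by
    ext i <;> simp [evalS]
  have hpair : evalPair c d = (Algebra.TensorProduct.productMap (evalS c) (evalS d)).toLinearMap :=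
    TensorProduct.ext' fun p q => by simp [evalPair]
  rw [hpair, hprod, ← MvPolynomial.coe_aeval_eq_eval]
  rfl

theorem eq_of_evalPair_eq {x y : H ⊗[ℝ] H} (h : ∀ c d : Series, evalPair c d x = evalPair c d y) :
    x = y := by
  apply (MvPolynomial.tensorEquivSum ℝ Word Word ℝ).injective
  refine MvPolynomial.funext fun f => ?_
  have := h (f ∘ Sum.inl) (f ∘ Sum.inr)
  rwa [evalPair_eq_eval_tensorEquivSum, evalPair_eq_eval_tensorEquivSum,
    Sum.elim_comp_inl_inr] at this

theorem coproduct_aw {Δ : H →ₐ[ℝ] H ⊗[ℝ] H} (hΔ : IsFBCoproduct Δ) (η : Word) :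
    Δ (aw η) = ∑ ξ ∈ wordsLe η.length, aw ξ ⊗ₜ[ℝ] phiOne aw ξ η + 1 ⊗ₜ[ℝ] aw η := by
  refine eq_of_evalPair_eq fun c d => ?_
  rw [hΔ η c d, mcomp_eq_sum]
  simp [evalPair, evalS_aw, evalS_phiOne, phi_one_eq_phiOne]

theorem sum_antipode_mul_phiOne {Δ : H →ₐ[ℝ] H ⊗[ℝ] H} (hΔ : IsFBCoproduct Δ) {S : H →ₗ[ℝ] H}
    (hS : ∀ p : H, LinearMap.mul' ℝ H (TensorProduct.map S LinearMap.id (Δ p)) = counit p • 1)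
    (η : Word) : ∑ ξ ∈ wordsLe η.length, S (aw ξ) * phiOne aw ξ η = -aw η := by
  have hS1 : S 1 = 1 := by simpa [Algebra.TensorProduct.one_def] using hS 1
  have := hS (aw η)
  rw [coproduct_aw hΔ] at this
  simpa [hS1, counit, evalS_aw, eq_neg_iff_add_eq_zero] using this

theorem eq_of_unitriangular {ι A : Type*} [Ring A] (rank : ι → ℕ) (s : ι → Finset ι)
    (Q : ι → ι → A) (hs : ∀ i, i ∈ s i) (hQ_self : ∀ i, Q i i = 1)
    (hQ : ∀ i j, Q i j ≠ 0 → i = j ∨ rank i < rank j) {X Y : ι → A}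
    (h : ∀ j, ∑ i ∈ s j, X i * Q i j = ∑ i ∈ s j, Y i * Q i j) (j : ι) : X j = Y j := by
  induction j using (measure rank).wf.induction with
  | _ j ih =>
  have hsum : ∑ i ∈ s j, (X i - Y i) * Q i j = 0 := by
    simp only [sub_mul, Finset.sum_sub_distrib, h j, sub_self]
  rwa [Finset.sum_eq_single_of_mem j (hs j), hQ_self, mul_one, sub_eq_zero] at hsum
  intro i _ hij
  by_cases hQij : Q i j = 0
  · rw [hQij, mul_zero]
  · rcases hQ i j hQij with rfl | hlt
    · exact absurd rfl hij
    · rw [ih i hlt, sub_self, zero_mul]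

end Paper

open Paper in
/-- For any nonempty word `η = x_{i_1} ⋯ x_{i_l} ∈ X*`, the antipode `S`
of the output feedback Hopf algebra satisfies `S a_η = (−1)^{|η|−1} Θ̃′_η (a_∅)`. -/
theorem antipode_right_augmentation_formula
    (Δ : H →ₐ[ℝ] (H ⊗[ℝ] H)) (hΔ : IsFBCoproduct Δ)
    (S : H →ₗ[ℝ] H) (hS : IsAntipode Δ S) :
    ∀ η : Word, η ≠ [] →
      S (aw η) = ((-1 : ℝ) ^ (η.length - 1)) • thetaPWord η (aw []) := by
  have hS_eq : ∀ η, S (aw η) = -derivWord η (aw []) :=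
    eq_of_unitriangular degW (fun η => wordsLe η.length) (phiOne aw) (fun η => by simp)
      (phiOne_self aw) (fun ξ η h => (eq_or_lt_of_phiOne_ne_zero h).imp_right And.right) fun η => by
        simp only [sum_antipode_mul_phiOne hΔ hS.1, neg_mul, Finset.sum_neg_distrib,
          ← expansion_apply, expansion_aw, List.nil_append]
  rintro (_ | ⟨i, η⟩) hη
  · exact absurd rfl hη
  rw [hS_eq, thetaPWord_eq_smul_derivWord, LinearMap.smul_apply, smul_smul, ← pow_add]
  simp
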